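/- arXiv:1806.00900 — 2 statements merged into one kernel-verified Lean document; each statement's English description precedes it below -/
import Mathlib

section
/- Fix c > 0 and M* ∈ ℝ^{d₁×d₂}. For all U ∈ ℝ^{d₁×r}, V ∈ ℝ^{d₂×r} with ‖U‖_F² ≤ c‖M*‖_F and ‖V‖_F² ≤ c‖M*‖_F, and for all Δ_U ∈ ℝ^{d₁×r}, Δ_V ∈ ℝ^{d₂×r}, the Hessian quadratic form of f at (U, V) satisfies 2⟨UVᵀ − M*, Δ_U Δ_Vᵀ⟩ + ‖U Δ_Vᵀ + Δ_U Vᵀ‖_F² ≤ (6c + 2)·‖M*‖_F·(‖Δ_U‖_F² + ‖Δ_V‖_F²). In particular, f is ((6c+2)‖M*‖_F)-smooth on this bounded set. -/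
/-!
Cauchy–Schwarz for the trace inner product and submultiplicativity of the Frobenius norm bound
the cross term by `2 (‖U‖‖V‖ + ‖M*‖) ‖Δ_U‖‖Δ_V‖` and the second term by
`(‖U‖‖Δ_V‖ + ‖Δ_U‖‖V‖)²`. With `‖U‖², ‖V‖² ≤ c‖M*‖` and AM–GM their sum is at most
`(3c + 1)‖M*‖ (‖Δ_U‖² + ‖Δ_V‖²)`.
-/

open Matrix

/-- Frobenius norm of a real matrix. -/
noncomputable def frob {m n : Type*} [Fintype m] [Fintype n] (A : Matrix m n ℝ) : ℝ :=
  Real.sqrt (∑ i, ∑ j, A i j ^ 2)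

/-- Trace inner product `⟨A, B⟩ = tr(AᵀB)` of real matrices. -/
def minner {m n : Type*} [Fintype m] [Fintype n] (A B : Matrix m n ℝ) : ℝ :=
  ∑ i, ∑ j, A i j * B i j

open scoped Matrix.Norms.Frobenius

section

variable {m n p : Type*} [Fintype m] [Fintype n] [Fintype p]

theorem frob_eq_norm (A : Matrix m n ℝ) : frob A = ‖A‖ := by
  simp [frob, frobenius_norm_def, Real.sqrt_eq_rpow]

theorem minner_le_norm_mul_norm (A B : Matrix m n ℝ) : minner A B ≤ ‖A‖ * ‖B‖ := by
  -- the Frobenius norm is the norm of `A` viewed in `L²(m, L²(n))`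
  have hinner : minner A B = inner ℝ (WithLp.toLp 2 fun i ↦ WithLp.toLp 2 (A i) :
      WithLp 2 (m → WithLp 2 (n → ℝ))) (WithLp.toLp 2 fun i ↦ WithLp.toLp 2 (B i)) := by
    simp [minner, PiLp.inner_apply, mul_comm]
  rw [hinner]
  exact real_inner_le_norm _ _

theorem hessian_form_le_norms (M : Matrix m n ℝ) (U DU : Matrix m p ℝ) (V DV : Matrix n p ℝ) :
    2 * minner (U * Vᵀ - M) (DU * DVᵀ) + ‖U * DVᵀ + DU * Vᵀ‖ ^ 2
      ≤ 2 * ((‖U‖ * ‖V‖ + ‖M‖) * (‖DU‖ * ‖DV‖)) + (‖U‖ * ‖DV‖ + ‖DU‖ * ‖V‖) ^ 2 := by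
  have hcross : ‖U * Vᵀ - M‖ * ‖DU * DVᵀ‖ ≤ (‖U‖ * ‖V‖ + ‖M‖) * (‖DU‖ * ‖DV‖) := by
    gcongr
    · calc ‖U * Vᵀ - M‖ ≤ ‖U * Vᵀ‖ + ‖M‖ := norm_sub_le _ _
        _ ≤ ‖U‖ * ‖V‖ + ‖M‖ := by grw [frobenius_norm_mul, frobenius_norm_transpose]
    · grw [frobenius_norm_mul, frobenius_norm_transpose]
  have hsym : ‖U * DVᵀ + DU * Vᵀ‖ ≤ ‖U‖ * ‖DV‖ + ‖DU‖ * ‖V‖ := by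
    grw [norm_add_le, frobenius_norm_mul, frobenius_norm_mul, frobenius_norm_transpose,
      frobenius_norm_transpose]
  grw [minner_le_norm_mul_norm, hcross, hsym]

end

theorem two_mul_add_sq_le_of_sq_le {K m u v a b : ℝ} (hu : u ^ 2 ≤ K) (hv : v ^ 2 ≤ K)
    (hm : 0 ≤ m) :
    2 * ((u * v + m) * (a * b)) + (u * b + a * v) ^ 2 ≤ (3 * K + m) * (a ^ 2 + b ^ 2) := by
  -- `|2uv| ≤ u² + v²`, `|2ab| ≤ a² + b²` and `(ub + av)² ≤ 2(u²b² + a²v²)`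
  nlinarith [sq_nonneg (u - v), sq_nonneg (a - b), sq_nonneg (u * b - a * v)]

theorem hessian_bound_on_bounded_set_general {d₁ d₂ r : ℕ} (c : ℝ)
    (M : Matrix (Fin d₁) (Fin d₂) ℝ)
    (U : Matrix (Fin d₁) (Fin r) ℝ) (V : Matrix (Fin d₂) (Fin r) ℝ)
    (hU : frob U ^ 2 ≤ c * frob M) (hV : frob V ^ 2 ≤ c * frob M)
    (DU : Matrix (Fin d₁) (Fin r) ℝ) (DV : Matrix (Fin d₂) (Fin r) ℝ) :
    2 * minner (U * Vᵀ - M) (DU * DVᵀ) + frob (U * DVᵀ + DU * Vᵀ) ^ 2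
      ≤ (6 * c + 2) * frob M * (frob DU ^ 2 + frob DV ^ 2) := by
  simp only [frob_eq_norm] at *
  have hcM : 0 ≤ c * ‖M‖ := (sq_nonneg _).trans hU
  have hbound_nonneg : 0 ≤ (3 * (c * ‖M‖) + ‖M‖) * (‖DU‖ ^ 2 + ‖DV‖ ^ 2) :=
    mul_nonneg (by linarith [norm_nonneg M]) (by positivity)
  calc _ ≤ 2 * ((‖U‖ * ‖V‖ + ‖M‖) * (‖DU‖ * ‖DV‖)) + (‖U‖ * ‖DV‖ + ‖DU‖ * ‖V‖) ^ 2 :=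
        hessian_form_le_norms M U DU V DV
    _ ≤ (3 * (c * ‖M‖) + ‖M‖) * (‖DU‖ ^ 2 + ‖DV‖ ^ 2) :=
        two_mul_add_sq_le_of_sq_le hU hV (norm_nonneg M)
    _ ≤ (6 * c + 2) * ‖M‖ * (‖DU‖ ^ 2 + ‖DV‖ ^ 2) := by linarith

/-- Smoothness of `f(U,V) = ½‖UVᵀ − M*‖_F²` over a bounded set: the Hessian quadratic
form at `(U,V)` in direction `(Δ_U, Δ_V)` is at most `(6c+2)‖M*‖_F ‖Δ‖_F²` whenever
`‖U‖_F², ‖V‖_F² ≤ c‖M*‖_F`. -/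
theorem hessian_bound_on_bounded_set {d₁ d₂ r : ℕ} (c : ℝ) (hc : 0 < c)
    (M : Matrix (Fin d₁) (Fin d₂) ℝ)
    (U : Matrix (Fin d₁) (Fin r) ℝ) (V : Matrix (Fin d₂) (Fin r) ℝ)
    (hU : frob U ^ 2 ≤ c * frob M) (hV : frob V ^ 2 ≤ c * frob M)
    (DU : Matrix (Fin d₁) (Fin r) ℝ) (DV : Matrix (Fin d₂) (Fin r) ℝ) :
    2 * minner (U * Vᵀ - M) (DU * DVᵀ) + frob (U * DVᵀ + DU * Vᵀ) ^ 2
      ≤ (6 * c + 2) * frob M * (frob DU ^ 2 + frob DV ^ 2) :=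
  hessian_bound_on_bounded_set_general c M U V hU hV DU DV
end

section
/- Let U ∈ ℝ^{d₁×r}, V ∈ ℝ^{d₂×r}, M* ∈ ℝ^{d₁×d₂}, and 0 < ε ≤ ‖M*‖_F. If ‖UVᵀ‖_F ≤ 3‖M*‖_F and ‖UᵀU − VᵀV‖_F ≤ ε, then ‖U‖_F² ≤ 5√r·‖M*‖_F and ‖V‖_F² ≤ 5√r·‖M*‖_F. -/
open Matrix

/-! The Gram matrix `G = UᵀU` satisfies `‖G‖² = ⟪G, VᵀV⟫ + ⟪G, UᵀU - VᵀV⟫` and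
`⟪UᵀU, VᵀV⟫ = ‖UVᵀ‖²`, so `‖G‖² ≤ 9‖M*‖² + ‖G‖‖M*‖` and hence `‖G‖ ≤ 4‖M*‖`.
Since `‖U‖² = tr G` and `|tr X| ≤ √r ‖X‖` (Cauchy–Schwarz against the identity), this gives
`‖U‖² ≤ 4√r‖M*‖`; and `‖V‖² = tr G - tr (UᵀU - VᵀV)` costs at most another `√r ε ≤ √r‖M*‖`. -/

noncomputable def frobInner {m n : Type*} [Fintype m] [Fintype n] (A B : Matrix m n ℝ) : ℝ :=
  ∑ i, ∑ j, A i j * B i j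

section Frobenius

variable {m n k : Type*} [Fintype m] [Fintype n] [Fintype k]

lemma frob_nonneg (A : Matrix m n ℝ) : 0 ≤ frob A := Real.sqrt_nonneg _

lemma frob_sq (A : Matrix m n ℝ) : frob A ^ 2 = frobInner A A := by
  rw [frob, Real.sq_sqrt (by positivity), frobInner]
  simp only [sq]

lemma frobInner_eq_trace (A B : Matrix m n ℝ) : frobInner A B = (Aᵀ * B).trace := by
  simp only [frobInner, trace, diag, mul_apply, transpose_apply]
  exact Finset.sum_comm

lemma frob_sq_eq_trace (A : Matrix m n ℝ) : frob A ^ 2 = (Aᵀ * A).trace := by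
  rw [frob_sq, frobInner_eq_trace]

lemma frobInner_sub_right (A B C : Matrix m n ℝ) :
    frobInner A (B - C) = frobInner A B - frobInner A C := by
  simp only [frobInner, Matrix.sub_apply, mul_sub, Finset.sum_sub_distrib]

lemma abs_frobInner_le (A B : Matrix m n ℝ) : |frobInner A B| ≤ frob A * frob B := by
  have hCS : frobInner A B ^ 2 ≤ (∑ i, ∑ j, A i j ^ 2) * ∑ i, ∑ j, B i j ^ 2 := by
    simpa only [frobInner, Fintype.sum_prod_type] using
      Finset.sum_mul_sq_le_sq_mul_sq Finset.univ (fun p : m × n ↦ A p.1 p.2)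
        (fun p : m × n ↦ B p.1 p.2)
  calc |frobInner A B| = Real.sqrt (frobInner A B ^ 2) := (Real.sqrt_sq_eq_abs _).symm
    _ ≤ Real.sqrt ((∑ i, ∑ j, A i j ^ 2) * ∑ i, ∑ j, B i j ^ 2) := Real.sqrt_le_sqrt hCS
    _ = frob A * frob B := Real.sqrt_mul (by positivity) _

lemma frobInner_gram_gram (U : Matrix m k ℝ) (V : Matrix n k ℝ) :
    frobInner (Uᵀ * U) (Vᵀ * V) = frob (U * Vᵀ) ^ 2 := by
  rw [frob_sq_eq_trace, frobInner_eq_trace, transpose_mul, transpose_transpose, transpose_mul,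
    transpose_transpose, Matrix.mul_assoc V, trace_mul_comm V]
  simp only [Matrix.mul_assoc]

lemma frob_one [DecidableEq n] : frob (1 : Matrix n n ℝ) = Real.sqrt (Fintype.card n) := by
  simp [frob, one_apply, sq]

lemma abs_trace_le_sqrt_card_mul_frob [DecidableEq n] (X : Matrix n n ℝ) :
    |X.trace| ≤ Real.sqrt (Fintype.card n) * frob X := by
  simpa [frobInner_eq_trace, frob_one] using abs_frobInner_le 1 X

lemma frob_gram_le_of_balanced {c : ℝ} (U : Matrix m k ℝ) (V : Matrix n k ℝ)
    (hprod : frob (U * Vᵀ) ≤ 3 * c) (hbal : frob (Uᵀ * U - Vᵀ * V) ≤ c) :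
    frob (Uᵀ * U) ≤ 4 * c := by
  set x := frob (Uᵀ * U)
  have hx : 0 ≤ x := frob_nonneg _
  have hc : 0 ≤ c := (frob_nonneg _).trans hbal
  have hcross : frobInner (Uᵀ * U) (Uᵀ * U - Vᵀ * V) ≤ x * c :=
    (le_abs_self _).trans <| (abs_frobInner_le _ _).trans <| mul_le_mul_of_nonneg_left hbal hx
  have hsq : x ^ 2 ≤ (3 * c) ^ 2 + x * c := by
    have hexp : x ^ 2 = frob (U * Vᵀ) ^ 2 + frobInner (Uᵀ * U) (Uᵀ * U - Vᵀ * V) := by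
      rw [frobInner_sub_right, frobInner_gram_gram U V, frob_sq]
      ring
    have := pow_le_pow_left₀ (frob_nonneg _) hprod 2
    linarith
  nlinarith

end Frobenius

theorem balanced_implies_bounded_general {d₁ d₂ r : ℕ}
    (U : Matrix (Fin d₁) (Fin r) ℝ) (V : Matrix (Fin d₂) (Fin r) ℝ)
    (M : Matrix (Fin d₁) (Fin d₂) ℝ) (ε : ℝ)
    (hεM : ε ≤ frob M)
    (hprod : frob (U * Vᵀ) ≤ 3 * frob M)
    (hbal : frob (Uᵀ * U - Vᵀ * V) ≤ ε) :
    frob U ^ 2 ≤ 5 * Real.sqrt r * frob M ∧ frob V ^ 2 ≤ 5 * Real.sqrt r * frob M := by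
  have hgram := frob_gram_le_of_balanced U V hprod (hbal.trans hεM)
  have htrGram := abs_le.mp (abs_trace_le_sqrt_card_mul_frob (Uᵀ * U))
  have htrDiff := abs_le.mp (abs_trace_le_sqrt_card_mul_frob (Uᵀ * U - Vᵀ * V))
  have htrV : (Vᵀ * V).trace = (Uᵀ * U).trace - (Uᵀ * U - Vᵀ * V).trace := by
    rw [trace_sub]; ring
  simp only [Fintype.card_fin] at htrGram htrDiff
  have hr := Real.sqrt_nonneg (r : ℝ)
  have hgram_r := mul_le_mul_of_nonneg_left hgram hr
  have hdiff := mul_le_mul_of_nonneg_left (hbal.trans hεM) hr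
  rw [frob_sq_eq_trace, frob_sq_eq_trace, htrV]
  constructor <;> nlinarith

/-- If `‖UVᵀ‖_F ≤ 3‖M*‖_F` and `‖UᵀU − VᵀV‖_F ≤ ε ≤ ‖M*‖_F`, then both factors are
bounded: `‖U‖_F² ≤ 5√r‖M*‖_F` and `‖V‖_F² ≤ 5√r‖M*‖_F`. -/
theorem balanced_implies_bounded {d₁ d₂ r : ℕ}
    (U : Matrix (Fin d₁) (Fin r) ℝ) (V : Matrix (Fin d₂) (Fin r) ℝ)
    (M : Matrix (Fin d₁) (Fin d₂) ℝ) (ε : ℝ)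
    (hε0 : 0 < ε) (hεM : ε ≤ frob M)
    (hprod : frob (U * Vᵀ) ≤ 3 * frob M)
    (hbal : frob (Uᵀ * U - Vᵀ * V) ≤ ε) :
    frob U ^ 2 ≤ 5 * Real.sqrt r * frob M ∧ frob V ^ 2 ≤ 5 * Real.sqrt r * frob M :=
  balanced_implies_bounded_general U V M ε hεM hprod hbal
end
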